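/- Let I1 = [0,2), I2 = [1,3), I3 = [2,4) and I3' = [−1,1). Then opt([I1,I2,I3]) = 2 and opt([I1,I2,I3']) = 2, and for every online interval-selection algorithm A with revocable acceptances, |A([I1,I2,I3])| + |A([I1,I2,I3'])| ≤ 3. (This is the deterministic core, via Yao's principle with the adversary choosing each of the two sequences with probability 1/2, of the lemma that no randomized algorithm achieves a competitive ratio better than 4/3 for unweighted instances with no proper inclusions.) -/

import Mathlib

open scoped Classical

/-- An interval: a pair `(s, f)` of reals with `s < f`, identified with `[s, f) ⊆ ℝ`. -/
structure Ivl where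
  s : ℝ
  f : ℝ
  lt : s < f

namespace Ivl

noncomputable instance : DecidableEq Ivl := fun a b =>
  decidable_of_iff (a.s = b.s ∧ a.f = b.f) (by cases a; cases b; simp)

/-- The set of points covered by an interval. -/
def toSet (I : Ivl) : Set ℝ := Set.Ico I.s I.f

/-- The length of an interval. -/
def length (I : Ivl) : ℝ := I.f - I.s

/-- Two intervals conflict if their point sets intersect. -/
def Conflict (I J : Ivl) : Prop := (I.toSet ∩ J.toSet).Nonempty

/-- A finite set of intervals is feasible (pairwise disjoint) if no two distinct members
conflict. -/
def Feasible (S : Finset Ivl) : Prop :=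
  ∀ I ∈ S, ∀ J ∈ S, I ≠ J → ¬ Conflict I J

end Ivl

/-- An online interval-selection algorithm with revocable acceptances: a function from finite
lists of intervals to finite sets of intervals such that the output consists of intervals
occurring in the input, is pairwise disjoint, and each new output is contained in the previous
output together with the newly arrived interval. -/
structure OnlineAlg where
  run : List Ivl → Finset Ivl
  mem_of_run : ∀ σ : List Ivl, ∀ I ∈ run σ, I ∈ σ
  feasible_run : ∀ σ : List Ivl, Ivl.Feasible (run σ)
  revocable : ∀ (σ : List Ivl) (I : Ivl), run (σ ++ [I]) ⊆ insert I (run σ)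

/-- `opt σ` is the maximum cardinality of a pairwise-disjoint finite set of intervals all of
which occur in `σ`. -/
noncomputable def opt (σ : List Ivl) : ℕ :=
  (σ.toFinset.powerset.filter (fun T => Ivl.Feasible T)).sup Finset.card

noncomputable def i1 : Ivl := ⟨0, 2, by norm_num⟩
noncomputable def i2 : Ivl := ⟨1, 3, by norm_num⟩
noncomputable def i3 : Ivl := ⟨2, 4, by norm_num⟩
noncomputable def i3' : Ivl := ⟨-1, 1, by norm_num⟩

/-!
Since `I1` and `I2` conflict, after seeing them the algorithm holds at most one of the two.
Whichever it holds, one of the two continuations brings an interval conflicting with it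
(`I3'` conflicts with `I1`, `I3` with `I2`); on that sequence the final selection lies in a
conflicting pair, hence has at most one element, while on the other it has at most two.
Each sequence contains a disjoint pair but not three pairwise disjoint intervals, so both
optima equal `2`.
-/

namespace Ivl

theorem conflict_iff {I J : Ivl} : Conflict I J ↔ max I.s J.s < min I.f J.f := by
  rw [Conflict, toSet, toSet, Set.Ico_inter_Ico, Set.nonempty_Ico]

theorem Conflict.symm {I J : Ivl} (h : Conflict I J) : Conflict J I := by
  rwa [Conflict, Set.inter_comm]

theorem conflict_self (I : Ivl) : Conflict I I := by
  simpa [conflict_iff] using I.lt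

theorem ne_of_not_conflict {I J : Ivl} (h : ¬ Conflict I J) : I ≠ J := by
  rintro rfl
  exact h (conflict_self I)

theorem feasible_pair {I J : Ivl} (h : ¬ Conflict I J) : Feasible {I, J} := by
  intro K hK L hL hKL
  simp only [Finset.mem_insert, Finset.mem_singleton] at hK hL
  rcases hK with rfl | rfl <;> rcases hL with rfl | rfl
  exacts [absurd rfl hKL, h, fun h' => h h'.symm, absurd rfl hKL]

theorem Feasible.eq_of_conflict {T : Finset Ivl} (hT : Feasible T) {I J : Ivl} (hI : I ∈ T)
    (hJ : J ∈ T) (h : Conflict I J) : I = J := by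
  by_contra hIJ
  exact hT I hI J hJ hIJ h

theorem Feasible.subset_insert_or_subset_insert {T U : Finset Ivl} (hT : Feasible T) {I J : Ivl}
    (h : Conflict I J) (hTU : T ⊆ insert I (insert J U)) :
    T ⊆ insert I U ∨ T ⊆ insert J U := by
  by_cases hJ : J ∈ T
  · right
    intro K hK
    rcases Finset.mem_insert.mp (hTU hK) with rfl | hK'
    · rw [hT.eq_of_conflict hK hJ h]
      exact Finset.mem_insert_self _ _
    · exact hK'
  · left
    intro K hK
    rcases Finset.mem_insert.mp (hTU hK) with rfl | hK'
    · exact Finset.mem_insert_self _ _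
    · rcases Finset.mem_insert.mp hK' with rfl | hKU
      · exact absurd hK hJ
      · exact Finset.mem_insert_of_mem hKU

theorem Feasible.subset_singleton_or_subset_singleton {T : Finset Ivl} (hT : Feasible T)
    {I J : Ivl} (h : Conflict I J) (hTU : T ⊆ {I, J}) : T ⊆ {I} ∨ T ⊆ {J} := by
  simpa using hT.subset_insert_or_subset_insert (U := ∅) h (by simpa using hTU)

end Ivl

open Ivl

theorem le_opt {σ : List Ivl} {T : Finset Ivl} (hTσ : T ⊆ σ.toFinset) (hT : Feasible T) :
    T.card ≤ opt σ :=
  Finset.le_sup (f := Finset.card) (Finset.mem_filter.mpr ⟨Finset.mem_powerset.mpr hTσ, hT⟩)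

theorem opt_le {σ : List Ivl} {n : ℕ} (h : ∀ T ⊆ σ.toFinset, Feasible T → T.card ≤ n) :
    opt σ ≤ n := by
  refine Finset.sup_le fun T hT => ?_
  rw [Finset.mem_filter, Finset.mem_powerset] at hT
  exact h T hT.1 hT.2

theorem opt_eq_two_of_conflict {a b c : Ivl} (hab : Conflict a b)
    (hc : ¬ Conflict a c ∨ ¬ Conflict b c) : opt [a, b, c] = 2 := by
  apply le_antisymm
  · refine opt_le fun T hTσ hT => ?_
    have hTabc : T ⊆ insert a (insert b {c}) := by simpa using hTσ
    rcases hT.subset_insert_or_subset_insert hab hTabc with hTac | hTbc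
    · exact (Finset.card_le_card hTac).trans Finset.card_le_two
    · exact (Finset.card_le_card hTbc).trans Finset.card_le_two
  · rcases hc with hac | hbc
    · rw [← Finset.card_pair (ne_of_not_conflict hac)]
      exact le_opt (by simp) (feasible_pair hac)
    · rw [← Finset.card_pair (ne_of_not_conflict hbc)]
      exact le_opt (by simp) (feasible_pair hbc)

namespace OnlineAlg

variable (A : OnlineAlg)

theorem card_run_append_le (σ : List Ivl) (I : Ivl) :
    (A.run (σ ++ [I])).card ≤ (A.run σ).card + 1 :=
  (Finset.card_le_card (A.revocable σ I)).trans (Finset.card_insert_le _ _)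

theorem card_run_append_le_one {σ : List Ivl} {I J : Ivl} (hσ : A.run σ ⊆ {J})
    (h : Conflict I J) : (A.run (σ ++ [I])).card ≤ 1 := by
  have hIJ : A.run (σ ++ [I]) ⊆ {I, J} :=
    (A.revocable σ I).trans (Finset.insert_subset_insert I hσ)
  rcases (A.feasible_run _).subset_singleton_or_subset_singleton h hIJ with hI | hJ
  · exact (Finset.card_le_card hI).trans_eq (Finset.card_singleton I)
  · exact (Finset.card_le_card hJ).trans_eq (Finset.card_singleton J)

theorem run_pair_subset_singleton {a b : Ivl} (hab : Conflict a b) :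
    A.run [a, b] ⊆ {a} ∨ A.run [a, b] ⊆ {b} :=
  (A.feasible_run _).subset_singleton_or_subset_singleton hab fun K hK => by
    simpa using A.mem_of_run _ K hK

theorem card_run_add_card_run_le_three {a b c c' : Ivl} (hab : Conflict a b)
    (hcb : Conflict c b) (hc'a : Conflict c' a) :
    (A.run [a, b, c]).card + (A.run [a, b, c']).card ≤ 3 := by
  have hc : (A.run [a, b, c]).card ≤ (A.run [a, b]).card + 1 := A.card_run_append_le [a, b] c
  have hc' : (A.run [a, b, c']).card ≤ (A.run [a, b]).card + 1 := A.card_run_append_le [a, b] c'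
  rcases A.run_pair_subset_singleton hab with ha | hb
  · have hS := (Finset.card_le_card ha).trans_eq (Finset.card_singleton a)
    have hc'1 : (A.run [a, b, c']).card ≤ 1 := A.card_run_append_le_one ha hc'a
    omega
  · have hS := (Finset.card_le_card hb).trans_eq (Finset.card_singleton b)
    have hc1 : (A.run [a, b, c]).card ≤ 1 := A.card_run_append_le_one hb hcb
    omega

end OnlineAlg

/-- Deterministic core of the `4/3` randomized lower bound for instances with no proper
inclusions: on the two chains `[I1, I2, I3]` and `[I1, I2, I3']` (with `I1 = [0,2)`,
`I2 = [1,3)`, `I3 = [2,4)`, `I3' = [-1,1)`) the optimum is `2` in both cases, while every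
deterministic online algorithm with revocable acceptances obtains solutions of total
cardinality at most `3` over the two sequences. -/
theorem randomized_four_thirds_core :
    opt [i1, i2, i3] = 2 ∧ opt [i1, i2, i3'] = 2 ∧
      ∀ A : OnlineAlg, (A.run [i1, i2, i3]).card + (A.run [i1, i2, i3']).card ≤ 3 := by
  have h12 : Conflict i1 i2 := by norm_num [conflict_iff, i1, i2]
  have h32 : Conflict i3 i2 := by norm_num [conflict_iff, i3, i2]
  have h3'1 : Conflict i3' i1 := by norm_num [conflict_iff, i3', i1]
  have h13 : ¬ Conflict i1 i3 := by norm_num [conflict_iff, i1, i3]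
  have h23' : ¬ Conflict i2 i3' := by norm_num [conflict_iff, i2, i3']
  exact ⟨opt_eq_two_of_conflict h12 (Or.inl h13), opt_eq_two_of_conflict h12 (Or.inr h23'),
    fun A => A.card_run_add_card_run_le_three h12 h32 h3'1⟩
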